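/- Consider the Hilbert space ℂ^L with matrices indexed by sites x ∈ {0,…,L−1}, where site x is of sublattice type A if x is even and type B if x is odd, and let C' be the diagonal matrix with entries (−1)^x. Let H be a Hermitian L×L matrix with HC' + C'H = 0, let δ > 0, S = tanh(H/δ), and let θ : {0,…,L−1} → ℝ with associated diagonal matrix θ(X). Then Tr(C'·θ(X)·(1−S²)) = ½·Tr(C'·S·[θ(X),S]) + ∑_{x=0}^{L−1} (−1)^x·θ(x); in particular, when θ takes values in {0,1}, the edge index equals the bulk index plus n_{A,θ} − n_{B,θ}, the difference between the number of A sites and of B sites in the region where θ = 1. -/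

import Mathlib

/-!
Conjugation by the unitary chiral matrix `C` is a ⋆-automorphism sending `H` to `-H`; it therefore
commutes with the functional calculus and sends `S = tanh (H/δ)` to `tanh (-H/δ) = -S`, i.e. `C`
anticommutes with `S`. Then `C` commutes with `S²`, and cyclicity of the trace gives
`Tr (C S θ S) = -Tr (C θ S²)` and `Tr (C S S θ) = Tr (C θ S²)`, so `½ Tr (C S [θ, S]) = -Tr (C θ S²)`.
The remaining term `Tr (C θ)` is `∑ₓ (-1)^x θ(x)`.
-/

open MeasureTheory
open scoped ComplexOrder

noncomputable section

namespace Chiral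

/-- The ℓ²-operator norm of a square complex matrix. -/
def opNorm {n : Type*} [Fintype n] [DecidableEq n] (T : Matrix n n ℂ) : ℝ :=
  ‖Matrix.toEuclideanCLM (𝕜 := ℂ) T‖

/-- The trace norm `Tr √(T*T)` of a square complex matrix. -/
def traceNorm {n : Type*} [Fintype n] [DecidableEq n] (T : Matrix n n ℂ) : ℝ :=
  (((Matrix.posSemidef_conjTranspose_mul_self T).1.eigenvectorUnitary : Matrix n n ℂ) *
      Matrix.diagonal (fun i => ((Real.sqrt
        ((Matrix.posSemidef_conjTranspose_mul_self T).1.eigenvalues i) : ℝ) : ℂ)) *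
      (star (Matrix.posSemidef_conjTranspose_mul_self T).1.eigenvectorUnitary :
        Matrix n n ℂ)).trace.re

open Classical in
/-- Functional calculus of a Hermitian matrix: same eigenvectors, eigenvalue `E`
replaced by `f E`.  (Junk value `0` if the matrix is not Hermitian.) -/
def matFun {n : Type*} [Fintype n] [DecidableEq n] (f : ℝ → ℂ) (H : Matrix n n ℂ) :
    Matrix n n ℂ :=
  if hH : H.IsHermitian then
    (hH.eigenvectorUnitary : Matrix n n ℂ) *
      Matrix.diagonal (fun i => f (hH.eigenvalues i)) *
      star (hH.eigenvectorUnitary : Matrix n n ℂ)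
  else 0

/-- The matrix exponential. -/
def matExp {n : Type*} [Fintype n] [DecidableEq n] (M : Matrix n n ℂ) : Matrix n n ℂ :=
  NormedSpace.exp M

/-- `S = tanh (H/δ)` by functional calculus. -/
def tanhOf {n : Type*} [Fintype n] [DecidableEq n] (δ : ℝ) (H : Matrix n n ℂ) :
    Matrix n n ℂ :=
  matFun (fun E => (Real.tanh (E / δ) : ℂ)) H

/-- Index set of the finite chain of length `L` with two internal degrees of freedom. -/
abbrev Site (L : ℕ) := Fin L × Fin 2

/-- The `2×2` block of a matrix on the chain corresponding to sites `x, y`. -/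
def matBlock {L : ℕ} (T : Matrix (Site L) (Site L) ℂ) (x y : Fin L) :
    Matrix (Fin 2) (Fin 2) ℂ :=
  Matrix.of fun s s' => T (x, s) (y, s')

/-- A finite Hamiltonian is short range with parameters `d`, `K`. -/
def FinShortRange {L : ℕ} (H : Matrix (Site L) (Site L) ℂ) (d K : ℝ) : Prop :=
  ∀ x : Fin L, ∑ y : Fin L,
    opNorm (matBlock H x y) * Real.exp (|((x : ℕ) : ℝ) - ((y : ℕ) : ℝ)| / d) ≤ K

/-- The chiral operator `C` on the finite chain: `+1` on the `A` component,
`-1` on the `B` component. -/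
def chiralC (L : ℕ) : Matrix (Site L) (Site L) ℂ :=
  Matrix.diagonal fun p => if p.2 = 0 then 1 else -1

/-- The diagonal matrix `θ(X)` associated to a switch function `θ`. -/
def switchX {L : ℕ} (θ : Fin L → ℝ) : Matrix (Site L) (Site L) ℂ :=
  Matrix.diagonal fun p => (θ p.1 : ℂ)

/-- The standard switch function: `1` on the left half (`x < L/2`), `0` on the right half. -/
def midSwitch (L : ℕ) : Fin L → ℝ := fun x => if ((x : ℕ) : ℝ) < (L : ℝ) / 2 then 1 else 0

/-- The edge index `Tr (C θ(X) (1 - S²))`. -/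
def edgeIndex {L : ℕ} (θ : Fin L → ℝ) (S : Matrix (Site L) (Site L) ℂ) : ℂ :=
  Matrix.trace (chiralC L * switchX θ * (1 - S * S))

/-- The bulk index `½ Tr (C S [θ(X), S])`. -/
def bulkIndex {L : ℕ} (θ : Fin L → ℝ) (S : Matrix (Site L) (Site L) ℂ) : ℂ :=
  (1 / 2 : ℂ) * Matrix.trace (chiralC L * S * (switchX θ * S - S * switchX θ))

/-- The bulk Hilbert space `ℓ²(ℤ; ℂ²)`. -/
abbrev BulkSpace := lp (fun _ : ℤ => EuclideanSpace ℂ (Fin 2)) 2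

/-- Bounded operators on the bulk Hilbert space. -/
abbrev BulkOp := BulkSpace →L[ℂ] BulkSpace

/-- The canonical basis vector at site `x` with internal index `s`. -/
def bvec (x : ℤ) (s : Fin 2) : BulkSpace := lp.single 2 x (EuclideanSpace.single s 1)

/-- The `2×2` block `T_{x,y}` of a bulk operator. -/
def bulkBlock (T : BulkOp) (x y : ℤ) : Matrix (Fin 2) (Fin 2) ℂ :=
  Matrix.of fun s s' => (inner ℂ (bvec x s) (T (bvec y s')) : ℂ)

/-- A bulk Hamiltonian is short range with parameters `d`, `K`:
`sup_x ∑_y ‖T_{x,y}‖ e^{|x-y|/d} ≤ K`. -/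
def BulkShortRange (T : BulkOp) (d K : ℝ) : Prop :=
  ∀ x : ℤ,
    Summable (fun y : ℤ => opNorm (bulkBlock T x y) * Real.exp (|((x : ℝ)) - ((y : ℝ))| / d)) ∧
    ∑' y : ℤ, opNorm (bulkBlock T x y) * Real.exp (|((x : ℝ)) - ((y : ℝ))| / d) ≤ K

/-- The spectrum of `T` does not meet the open interval `(-Δ, Δ)`. -/
def HasGap (T : BulkOp) (Δ : ℝ) : Prop :=
  ∀ r : ℝ, |r| < Δ → (r : ℂ) ∉ spectrum ℂ T

/-- The on-site chiral matrix `diag(1, -1)`. -/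
def c2 : Matrix (Fin 2) (Fin 2) ℂ := Matrix.diagonal fun s => if s = 0 then 1 else -1

/-- A bulk operator is chiral: it anticommutes with the bulk chiral operator
(expressed blockwise, which is equivalent). -/
def ChiralBulk (T : BulkOp) : Prop :=
  ∀ x y : ℤ, c2 * bulkBlock T x y + bulkBlock T x y * c2 = 0

/-- The restriction `ι* T ι` of a bulk operator to the finite open chain of length `L`. -/
def restrict (L : ℕ) (T : BulkOp) : Matrix (Site L) (Site L) ℂ :=
  Matrix.of fun p q => bulkBlock T ((p.1 : ℕ) : ℤ) ((q.1 : ℕ) : ℤ) p.2 q.2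

end Chiral

section OddFunctionalCalculus

variable {A : Type*} [Ring A] [StarRing A] [TopologicalSpace A] [IsTopologicalRing A]
  [Algebra ℝ A] [ContinuousFunctionalCalculus ℝ A IsSelfAdjoint] [ContinuousMap.UniqueHom ℝ A]

theorem cfc_conj_unitary_of_odd {u : A} (hu : u ∈ unitary A) {a : A} (ha : IsSelfAdjoint a)
    (hua : u * a * star u = -a) {f : ℝ → ℝ} (hf : ∀ x, f (-x) = -f x) :
    u * cfc f a * star u = -cfc f a := by
  let φ := Unitary.conjStarAlgAut ℝ A ⟨u, hu⟩
  have hφ : ∀ x, φ x = u * x * star u := fun _ => rfl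
  have hφ_cont : Continuous φ := by
    show Continuous fun x => u * x * star u
    fun_prop
  by_cases hfa : ContinuousOn f (spectrum ℝ a)
  · -- `a` is unitarily equivalent to `-a`, so its spectrum is symmetric
    have hspec : (-·) '' spectrum ℝ a ⊆ spectrum ℝ a := by
      rw [Set.image_neg_eq_neg, spectrum.neg_eq, ← hua, ← hφ]
      exact AlgHom.spectrum_apply_subset (φ : A →ₐ[ℝ] A) a
    calc u * cfc f a * star u = cfc f (-a) := by
          rw [← hφ, StarAlgHomClass.map_cfc (S := ℝ) φ f a hfa hφ_cont ha
            (by rw [hφ, hua]; exact ha.neg), hφ, hua]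
      _ = cfc (fun x => -f x) a := by
          rw [← cfc_comp_neg f a (hfa.mono hspec) ha]
          simp only [hf]
      _ = -cfc f a := cfc_neg f a
  · simp [cfc_apply_of_not_continuousOn a hfa]

theorem cfc_anticomm_of_odd {u : A} (hu : u ∈ unitary A) {a : A} (ha : IsSelfAdjoint a)
    (hua : a * u + u * a = 0) {f : ℝ → ℝ} (hf : ∀ x, f (-x) = -f x) :
    cfc f a * u + u * cfc f a = 0 := by
  have hconj : u * a * star u = -a := by
    rw [eq_neg_of_add_eq_zero_right hua, neg_mul, mul_assoc, Unitary.mul_star_self_of_mem hu,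
      mul_one]
  have hconj_cfc := cfc_conj_unitary_of_odd hu ha hconj hf
  calc cfc f a * u + u * cfc f a
      = cfc f a * u + u * cfc f a * star u * u := by
        rw [mul_assoc _ (star u), Unitary.star_mul_self_of_mem hu, mul_one]
    _ = 0 := by rw [hconj_cfc, neg_mul, add_neg_cancel]

end OddFunctionalCalculus

theorem Matrix.diagonal_mem_unitary {n R : Type*} [Fintype n] [DecidableEq n] [CommRing R]
    [StarRing R] {d : n → R} (hd : ∀ i, d i ∈ unitary R) :
    Matrix.diagonal d ∈ unitary (Matrix n n R) := by
  rw [Unitary.mem_iff, Matrix.star_eq_conjTranspose, Matrix.diagonal_conjTranspose,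
    Matrix.diagonal_mul_diagonal, Matrix.diagonal_mul_diagonal, ← Matrix.diagonal_one]
  exact ⟨congrArg _ (funext fun i => Unitary.star_mul_self_of_mem (hd i)),
    congrArg _ (funext fun i => Unitary.mul_star_self_of_mem (hd i))⟩

theorem Matrix.trace_mul_commutator_of_anticomm {n R : Type*} [Fintype n] [CommRing R]
    {C S : Matrix n n R} (hCS : S * C + C * S = 0) (Θ : Matrix n n R) :
    (C * S * (Θ * S - S * Θ)).trace = -2 * (C * Θ * (S * S)).trace := by
  have hCS' : C * S = -(S * C) := eq_neg_of_add_eq_zero_right hCS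
  have h₁ : (C * S * (Θ * S)).trace = -(C * Θ * (S * S)).trace :=
    calc (C * S * (Θ * S)).trace = -(S * (C * Θ * S)).trace := by
          rw [hCS', ← Matrix.trace_neg]; congr 1; noncomm_ring
      _ = -(C * Θ * (S * S)).trace := by rw [Matrix.trace_mul_comm, mul_assoc]
  have h₂ : (C * S * (S * Θ)).trace = (C * Θ * (S * S)).trace :=
    calc (C * S * (S * Θ)).trace = (S * S * (C * Θ)).trace := by
          rw [← mul_assoc, hCS', neg_mul, mul_assoc S C, hCS']; congr 1; noncomm_ring
      _ = (C * Θ * (S * S)).trace := Matrix.trace_mul_comm _ _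
  rw [mul_sub, Matrix.trace_sub, h₁, h₂]
  ring

namespace Chiral

theorem tanhOf_eq_cfc {n : Type*} [Fintype n] [DecidableEq n] (δ : ℝ)
    {H : Matrix n n ℂ} (hH : H.IsHermitian) :
    tanhOf δ H = cfc (fun E : ℝ => Real.tanh (E / δ)) H := by
  rw [hH.cfc_eq, tanhOf, matFun, dif_pos hH, Matrix.IsHermitian.cfc]
  rfl

theorem stmt3_general (L : ℕ) (H : Matrix (Fin L) (Fin L) ℂ) (hH : H.IsHermitian)
    (hchiral : H * Matrix.diagonal (fun x : Fin L => (-1 : ℂ) ^ (x : ℕ)) +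
        Matrix.diagonal (fun x : Fin L => (-1 : ℂ) ^ (x : ℕ)) * H = 0)
    (δ : ℝ) (θ : Fin L → ℝ) :
    Matrix.trace (Matrix.diagonal (fun x : Fin L => (-1 : ℂ) ^ (x : ℕ)) *
        Matrix.diagonal (fun x : Fin L => (θ x : ℂ)) *
        (1 - tanhOf δ H * tanhOf δ H)) =
      (1 / 2 : ℂ) * Matrix.trace (Matrix.diagonal (fun x : Fin L => (-1 : ℂ) ^ (x : ℕ)) *
          tanhOf δ H *
          (Matrix.diagonal (fun x : Fin L => (θ x : ℂ)) * tanhOf δ H -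
            tanhOf δ H * Matrix.diagonal (fun x : Fin L => (θ x : ℂ)))) +
        ∑ x : Fin L, (-1 : ℂ) ^ (x : ℕ) * (θ x : ℂ) := by
  have hC : Matrix.diagonal (fun x : Fin L => (-1 : ℂ) ^ (x : ℕ)) ∈ unitary _ :=
    Matrix.diagonal_mem_unitary fun x => by simp [Unitary.mem_iff, ← mul_pow]
  have hS := tanhOf_eq_cfc δ hH ▸ cfc_anticomm_of_odd hC hH hchiral
    (f := fun E => Real.tanh (E / δ)) fun x => by rw [neg_div, Real.tanh_neg]
  rw [Matrix.trace_mul_commutator_of_anticomm hS, mul_sub, mul_one, Matrix.trace_sub,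
    Matrix.diagonal_mul_diagonal, Matrix.trace_diagonal]
  ring

theorem stmt3 (L : ℕ) (H : Matrix (Fin L) (Fin L) ℂ) (hH : H.IsHermitian)
    (hchiral : H * Matrix.diagonal (fun x : Fin L => (-1 : ℂ) ^ (x : ℕ)) +
        Matrix.diagonal (fun x : Fin L => (-1 : ℂ) ^ (x : ℕ)) * H = 0)
    (δ : ℝ) (hδ : 0 < δ) (θ : Fin L → ℝ) :
    Matrix.trace (Matrix.diagonal (fun x : Fin L => (-1 : ℂ) ^ (x : ℕ)) *
        Matrix.diagonal (fun x : Fin L => (θ x : ℂ)) *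
        (1 - tanhOf δ H * tanhOf δ H)) =
      (1 / 2 : ℂ) * Matrix.trace (Matrix.diagonal (fun x : Fin L => (-1 : ℂ) ^ (x : ℕ)) *
          tanhOf δ H *
          (Matrix.diagonal (fun x : Fin L => (θ x : ℂ)) * tanhOf δ H -
            tanhOf δ H * Matrix.diagonal (fun x : Fin L => (θ x : ℂ)))) +
        ∑ x : Fin L, (-1 : ℂ) ^ (x : ℕ) * (θ x : ℂ) :=
  stmt3_general L H hH hchiral δ θ

end Chiral

end
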